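/- Let Σ be a finite set, μ a probability distribution on Σ with full support, n, d ∈ ℕ with d ≥ 1, and ξ > 0. If g : Σ^n → ℂ is 1-bounded (|g(x)| ≤ 1 for all x) and satisfies W_{≤d}[g] ≥ ξ over μ^⊗n, then choosing a random restriction (I,y) with alive-probability 1/(2d), we have Pr_{I,y}[ |E_{z∼μ^I}[g_{\bar I→y}(z)]| ≥ √(ξ/(2e)) ] ≥ ξ/(2e). -/

import Mathlib

open scoped Classical BigOperators

noncomputable section

/-- Product weight `μ^{⊗n}(x) = ∏ᵢ μ(xᵢ)` on `Ω^n`. -/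
def wtp {Ω : Type*} [Fintype Ω] (μ : Ω → ℝ) {n : ℕ} (x : Fin n → Ω) : ℝ :=
  ∏ i, μ (x i)

/-- Inner product `⟨f,g⟩ = E_{x∼μ^{⊗n}}[f(x)·conj(g(x))]` on functions `Ω^n → ℂ`. -/
def innerμ {Ω : Type*} [Fintype Ω] (μ : Ω → ℝ) {n : ℕ} (f g : (Fin n → Ω) → ℂ) : ℂ :=
  ∑ x, (wtp μ x : ℂ) * f x * starRingEnd ℂ (g x)

/-- `g` is an `S`-junta: it depends only on the coordinates in `S`. -/
def IsJunta {Ω : Type*} {n : ℕ} (g : (Fin n → Ω) → ℂ) (S : Finset (Fin n)) : Prop :=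
  ∀ x y : Fin n → Ω, (∀ i ∈ S, x i = y i) → g x = g y

/-- Membership in `V_{=S} = V_{⊆S} ∩ ⋂_{T ⊊ S} V_{⊆T}^⊥`. -/
def InVeq {Ω : Type*} [Fintype Ω] (μ : Ω → ℝ) {n : ℕ}
    (g : (Fin n → Ω) → ℂ) (S : Finset (Fin n)) : Prop :=
  IsJunta g S ∧
    ∀ T : Finset (Fin n), T ⊂ S → ∀ h : (Fin n → Ω) → ℂ, IsJunta h T → innerμ μ g h = 0

/-- The squared `L²(μ^{⊗n})`-norm of `g`. -/
def norm2sq {Ω : Type*} [Fintype Ω] (μ : Ω → ℝ) {n : ℕ} (g : (Fin n → Ω) → ℂ) : ℝ :=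
  ∑ x, wtp μ x * Complex.normSq (g x)

/-- The point of `Ω^n` agreeing with `w` on `I` and with `y` outside `I`. -/
def mergeF {Ω : Type*} {n : ℕ} (I : Finset (Fin n)) (w : {i // i ∈ I} → Ω)
    (y : Fin n → Ω) : Fin n → Ω :=
  fun i => if h : i ∈ I then w ⟨i, h⟩ else y i

/-!
Write `P_I f (y) = E_{z∼μ^I}[f_{Ī→y}(z)]` for the average of `f` over the coordinates in `I`.
`P_I` is a self-adjoint projection onto the `Iᶜ`-juntas, it maps `V_{=S}` into the `(S \ I)`-juntas,
and `V_{=S}` is orthogonal to every `T`-junta with `S ⊄ T`. Hence the `P_I (g^{=S})` are pairwise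
orthogonal and `‖P_I g‖² ≥ ∑_{S ∩ I = ∅} ‖g^{=S}‖²`. Averaging over `I`, each `S` with `|S| ≤ d`
survives with probability `(1 - 1/(2d))^{|S|} ≥ 1/2`, so `E_I ‖P_I g‖² ≥ ξ/2`. Since `|P_I g| ≤ 1`,
`|P_I g|² ≤ θ + 1[|P_I g| ≥ √θ]` pointwise, which for `θ = ξ/(2e) ≤ ξ/4` leaves probability at
least `ξ/2 - θ ≥ θ`.
-/

open Finset

section Merge

variable {Ω : Type*} {n : ℕ} {I : Finset (Fin n)}

lemma mergeF_of_mem {w : {i // i ∈ I} → Ω} {y : Fin n → Ω} {i : Fin n} (h : i ∈ I) :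
    mergeF I w y i = w ⟨i, h⟩ :=
  dif_pos h

lemma mergeF_of_notMem {w : {i // i ∈ I} → Ω} {y : Fin n → Ω} {i : Fin n} (h : i ∉ I) :
    mergeF I w y i = y i :=
  dif_neg h

lemma mergeF_mergeF (w w' : {i // i ∈ I} → Ω) (y : Fin n → Ω) :
    mergeF I w (mergeF I w' y) = mergeF I w y := by
  funext i
  by_cases h : i ∈ I <;> simp [mergeF, h]

lemma mergeF_restrict (y : Fin n → Ω) : mergeF I (fun i => y i) y = y := by
  funext i
  by_cases h : i ∈ I <;> simp [mergeF, h]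

lemma isJunta_univ (f : (Fin n → Ω) → ℂ) : IsJunta f univ :=
  fun _ _ h => congrArg f (funext fun i => h i (mem_univ i))

end Merge

section Weights

variable {Ω : Type*} [Fintype Ω] {μ : Ω → ℝ} {n : ℕ}

lemma sum_pi_prod_eq_one {α : Type*} [Fintype α] [DecidableEq α] (hsum : ∑ a, μ a = 1) :
    ∑ w : α → Ω, ∏ a, μ (w a) = 1 := by
  rw [← Fintype.prod_sum fun (_ : α) b => μ b]
  simp [hsum]

lemma sum_wtp (hsum : ∑ a, μ a = 1) : ∑ x : Fin n → Ω, wtp μ x = 1 :=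
  sum_pi_prod_eq_one hsum

lemma wtp_pos (hμ : ∀ a, 0 < μ a) (x : Fin n → Ω) : 0 < wtp μ x :=
  prod_pos fun i _ => hμ (x i)

lemma wtp_mergeF_mul (I : Finset (Fin n)) (w : {i // i ∈ I} → Ω) (y : Fin n → Ω) :
    wtp μ (mergeF I w y) * ∏ i : {i // i ∈ I}, μ (y i) = wtp μ y * ∏ i, μ (w i) := by
  have hI : ∏ i ∈ I, μ (mergeF I w y i) = ∏ i : {i // i ∈ I}, μ (w i) := by
    rw [← prod_coe_sort]
    exact prod_congr rfl fun i _ => by rw [mergeF_of_mem i.2]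
  have hIc : ∏ i ∈ Iᶜ, μ (mergeF I w y i) = ∏ i ∈ Iᶜ, μ (y i) :=
    prod_congr rfl fun i hi => by rw [mergeF_of_notMem (mem_compl.mp hi)]
  rw [wtp, wtp, ← prod_mul_prod_compl I, ← prod_mul_prod_compl I, hI, hIc,
    ← prod_coe_sort I fun i => μ (y i)]
  ring

end Weights

section InnerProduct

variable {Ω : Type*} [Fintype Ω] {μ : Ω → ℝ} {n : ℕ}

lemma innerμ_self (f : (Fin n → Ω) → ℂ) : innerμ μ f f = norm2sq μ f := by
  rw [innerμ, norm2sq, Complex.ofReal_sum]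
  refine sum_congr rfl fun x _ => ?_
  rw [mul_assoc, Complex.mul_conj]
  push_cast
  ring

lemma norm2sq_nonneg (hμ : ∀ a, 0 < μ a) (f : (Fin n → Ω) → ℂ) : 0 ≤ norm2sq μ f :=
  sum_nonneg fun x _ => mul_nonneg (wtp_pos hμ x).le (Complex.normSq_nonneg _)

lemma eq_zero_of_norm2sq_eq_zero (hμ : ∀ a, 0 < μ a) {f : (Fin n → Ω) → ℂ}
    (h : norm2sq μ f = 0) : f = 0 := by
  funext x
  have hx := (sum_eq_zero_iff_of_nonneg fun y _ =>
    mul_nonneg (wtp_pos hμ y).le (Complex.normSq_nonneg (f y))).mp h x (mem_univ x)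
  simpa [(wtp_pos hμ x).ne'] using hx

lemma conj_innerμ (f h : (Fin n → Ω) → ℂ) : starRingEnd ℂ (innerμ μ f h) = innerμ μ h f := by
  rw [innerμ, innerμ, map_sum]
  refine sum_congr rfl fun x _ => ?_
  rw [map_mul, map_mul, Complex.conj_ofReal, Complex.conj_conj]
  ring

lemma innerμ_zero_left (h : (Fin n → Ω) → ℂ) : innerμ μ 0 h = 0 := by
  simp [innerμ]

lemma innerμ_sum_left {ι : Type*} (s : Finset ι) (f : ι → (Fin n → Ω) → ℂ)
    (h : (Fin n → Ω) → ℂ) : innerμ μ (∑ i ∈ s, f i) h = ∑ i ∈ s, innerμ μ (f i) h := by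
  simp only [innerμ, Finset.sum_apply, mul_sum, sum_mul]
  exact sum_comm

lemma innerμ_sum_right {ι : Type*} (s : Finset ι) (f : (Fin n → Ω) → ℂ)
    (h : ι → (Fin n → Ω) → ℂ) : innerμ μ f (∑ i ∈ s, h i) = ∑ i ∈ s, innerμ μ f (h i) := by
  simp only [innerμ, Finset.sum_apply, map_sum, mul_sum]
  exact sum_comm

end InnerProduct

section Average

variable {Ω : Type*} [Fintype Ω] {μ : Ω → ℝ} {n : ℕ} {I : Finset (Fin n)}

/-- `avgOn μ I f y = E_{z∼μ^I}[f_{Ī→y}(z)]`. -/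
def avgOn (μ : Ω → ℝ) (I : Finset (Fin n)) (f : (Fin n → Ω) → ℂ) : (Fin n → Ω) → ℂ :=
  fun y => ∑ w : {i // i ∈ I} → Ω, ((∏ i, μ (w i) : ℝ) : ℂ) * f (mergeF I w y)

lemma avgOn_sum {ι : Type*} (s : Finset ι) (f : ι → (Fin n → Ω) → ℂ) :
    avgOn μ I (∑ i ∈ s, f i) = ∑ i ∈ s, avgOn μ I (f i) := by
  funext y
  simp only [avgOn, Finset.sum_apply, mul_sum]
  exact sum_comm

lemma IsJunta.avgOn_sdiff {f : (Fin n → Ω) → ℂ} {S : Finset (Fin n)} (hf : IsJunta f S) :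
    IsJunta (avgOn μ I f) (S \ I) := by
  intro x y hxy
  refine sum_congr rfl fun w _ => congrArg _ (hf _ _ fun i hi => ?_)
  by_cases h : i ∈ I
  · rw [mergeF_of_mem h, mergeF_of_mem h]
  · rw [mergeF_of_notMem h, mergeF_of_notMem h, hxy i (mem_sdiff.mpr ⟨hi, h⟩)]

lemma isJunta_avgOn_compl (f : (Fin n → Ω) → ℂ) : IsJunta (avgOn μ I f) Iᶜ := by
  simpa [compl_eq_univ_sdiff] using (isJunta_univ f).avgOn_sdiff (μ := μ) (I := I)

lemma IsJunta.avgOn_eq (hsum : ∑ a, μ a = 1) {f : (Fin n → Ω) → ℂ} {S : Finset (Fin n)}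
    (hf : IsJunta f S) (hSI : Disjoint S I) : avgOn μ I f = f := by
  funext y
  have hconst : ∀ w : {i // i ∈ I} → Ω, f (mergeF I w y) = f y := fun w =>
    hf _ _ fun i hi => mergeF_of_notMem (disjoint_left.mp hSI hi)
  simp only [avgOn, hconst, ← sum_mul, ← Complex.ofReal_sum, sum_pi_prod_eq_one hsum,
    Complex.ofReal_one, one_mul]

lemma avgOn_avgOn (hsum : ∑ a, μ a = 1) (f : (Fin n → Ω) → ℂ) :
    avgOn μ I (avgOn μ I f) = avgOn μ I f :=
  (isJunta_avgOn_compl f).avgOn_eq hsum disjoint_compl_left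

lemma norm_avgOn_le_one (hμ : ∀ a, 0 < μ a) (hsum : ∑ a, μ a = 1) {f : (Fin n → Ω) → ℂ}
    (hf : ∀ x, ‖f x‖ ≤ 1) (y : Fin n → Ω) : ‖avgOn μ I f y‖ ≤ 1 := by
  have hw : ∀ w : {i // i ∈ I} → Ω, 0 ≤ ∏ i, μ (w i) := fun w =>
    prod_nonneg fun i _ => (hμ (w i)).le
  calc ‖avgOn μ I f y‖
      ≤ ∑ w : {i // i ∈ I} → Ω, ‖((∏ i, μ (w i) : ℝ) : ℂ) * f (mergeF I w y)‖ :=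
        norm_sum_le _ _
    _ ≤ ∑ w : {i // i ∈ I} → Ω, ∏ i, μ (w i) := sum_le_sum fun w _ => by
        rw [norm_mul, Complex.norm_real, Real.norm_of_nonneg (hw w)]
        exact mul_le_of_le_one_right (hw w) (hf _)
    _ = 1 := sum_pi_prod_eq_one hsum

/-- Swapping the `I`-coordinates of `y` with `w`, i.e. `(y, w) ↦ (mergeF I w y, y|_I)`, is an
involution preserving the weight `μ^{⊗n}(y) μ^I(w)`. -/
lemma innerμ_avgOn_left (f h : (Fin n → Ω) → ℂ) :
    innerμ μ (avgOn μ I f) h = innerμ μ f (avgOn μ I h) := by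
  let σ : (Fin n → Ω) × ({i // i ∈ I} → Ω) → (Fin n → Ω) × ({i // i ∈ I} → Ω) :=
    fun p => (mergeF I p.2 p.1, fun i => p.1 i)
  have hσ : Function.Involutive σ := by
    rintro ⟨y, w⟩
    ext1
    · exact (mergeF_mergeF _ _ y).trans (mergeF_restrict y)
    · funext i
      exact mergeF_of_mem i.2
  simp only [innerμ, avgOn, map_sum, map_mul, Complex.conj_ofReal, mul_sum, sum_mul,
    ← Fintype.sum_prod_type']
  refine Fintype.sum_equiv hσ.toPerm _ _ fun ⟨y, w⟩ => ?_
  simp only [Function.Involutive.coe_toPerm, σ, mergeF_mergeF, mergeF_restrict]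
  have hwt := congrArg (fun r : ℝ => (r : ℂ)) (wtp_mergeF_mul (μ := μ) I w y)
  push_cast at hwt ⊢
  linear_combination (-(f (mergeF I w y) * starRingEnd ℂ (h y))) * hwt

lemma innerμ_avgOn_avgOn (hsum : ∑ a, μ a = 1) (f h : (Fin n → Ω) → ℂ) :
    innerμ μ (avgOn μ I f) (avgOn μ I h) = innerμ μ f (avgOn μ I h) := by
  rw [innerμ_avgOn_left, avgOn_avgOn hsum]

end Average

section Orthogonality

variable {Ω : Type*} [Fintype Ω] {μ : Ω → ℝ} {n : ℕ}

/-- `P := avgOn μ Tᶜ` fixes the `T`-juntas and sends `F` to an `(S ∩ T)`-junta, which is orthogonal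
to `F`; so `‖P F‖² = ⟨F, P F⟩ = 0` and `⟨F, f⟩ = ⟨F, P f⟩ = ⟨P F, f⟩ = 0`. -/
lemma InVeq.innerμ_eq_zero_of_isJunta (hμ : ∀ a, 0 < μ a) (hsum : ∑ a, μ a = 1)
    {F f : (Fin n → Ω) → ℂ} {S T : Finset (Fin n)} (hF : InVeq μ F S) (hf : IsJunta f T)
    (hST : ¬ S ⊆ T) : innerμ μ F f = 0 := by
  have hssub : S \ Tᶜ ⊂ S := by
    obtain ⟨i, hiS, hiT⟩ := not_subset.mp hST
    exact ssubset_iff_of_subset sdiff_subset |>.mpr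
      ⟨i, hiS, fun hi => (mem_sdiff.mp hi).2 (mem_compl.mpr hiT)⟩
  have horth : innerμ μ F (avgOn μ Tᶜ F) = 0 := hF.2 _ hssub _ hF.1.avgOn_sdiff
  have hPF : avgOn μ Tᶜ F = 0 := by
    refine eq_zero_of_norm2sq_eq_zero hμ (Complex.ofReal_eq_zero.mp ?_)
    rw [← innerμ_self, innerμ_avgOn_avgOn hsum, horth]
  rw [← hf.avgOn_eq hsum disjoint_compl_right, ← innerμ_avgOn_left, hPF, innerμ_zero_left]

lemma innerμ_avgOn_eq_zero_of_ne (hμ : ∀ a, 0 < μ a) (hsum : ∑ a, μ a = 1)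
    {F : Finset (Fin n) → (Fin n → Ω) → ℂ} (hF : ∀ S, InVeq μ (F S) S) (I : Finset (Fin n))
    {S S' : Finset (Fin n)} (hne : S ≠ S') :
    innerμ μ (avgOn μ I (F S)) (avgOn μ I (F S')) = 0 := by
  by_cases hS : S ⊆ S' \ I
  · have hS' : ¬ S' ⊆ S \ I := fun h =>
      hne (hS.trans sdiff_subset |>.antisymm (h.trans sdiff_subset))
    rw [← conj_innerμ, innerμ_avgOn_avgOn hsum,
      (hF S').innerμ_eq_zero_of_isJunta hμ hsum (hF S).1.avgOn_sdiff hS', map_zero]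
  · rw [innerμ_avgOn_avgOn hsum,
      (hF S).innerμ_eq_zero_of_isJunta hμ hsum (hF S').1.avgOn_sdiff hS]

lemma norm2sq_avgOn_sum (hμ : ∀ a, 0 < μ a) (hsum : ∑ a, μ a = 1)
    {F : Finset (Fin n) → (Fin n → Ω) → ℂ} (hF : ∀ S, InVeq μ (F S) S) (I : Finset (Fin n)) :
    norm2sq μ (avgOn μ I (∑ S, F S)) = ∑ S, norm2sq μ (avgOn μ I (F S)) := by
  apply Complex.ofReal_injective
  simp only [← innerμ_self, Complex.ofReal_sum, avgOn_sum, innerμ_sum_left, innerμ_sum_right]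
  refine sum_congr rfl fun S _ => sum_eq_single S (fun S' _ hne => ?_) (by simp)
  exact innerμ_avgOn_eq_zero_of_ne hμ hsum hF I hne

lemma sum_norm2sq_disjoint_le (hμ : ∀ a, 0 < μ a) (hsum : ∑ a, μ a = 1)
    {F : Finset (Fin n) → (Fin n → Ω) → ℂ} (hF : ∀ S, InVeq μ (F S) S)
    (A : Finset (Finset (Fin n))) (I : Finset (Fin n)) :
    ∑ S ∈ A with Disjoint S I, norm2sq μ (F S) ≤ norm2sq μ (avgOn μ I (∑ S, F S)) := by
  rw [norm2sq_avgOn_sum hμ hsum hF]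
  calc ∑ S ∈ A with Disjoint S I, norm2sq μ (F S)
      = ∑ S ∈ A with Disjoint S I, norm2sq μ (avgOn μ I (F S)) :=
        sum_congr rfl fun S hS => by rw [(hF S).1.avgOn_eq hsum (mem_filter.mp hS).2]
    _ ≤ ∑ S, norm2sq μ (avgOn μ I (F S)) :=
        sum_le_sum_of_subset_of_nonneg (subset_univ _) fun S _ _ => norm2sq_nonneg hμ _

end Orthogonality

section RandomRestriction

variable {n : ℕ}

/-- The probability that a random restriction with alive-probability `q` has alive set `I`. -/
def restrictionWeight (q : ℝ) (I : Finset (Fin n)) : ℝ :=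
  q ^ #I * (1 - q) ^ (n - #I)

lemma restrictionWeight_nonneg {q : ℝ} (hq₀ : 0 ≤ q) (hq₁ : q ≤ 1) (I : Finset (Fin n)) :
    0 ≤ restrictionWeight q I :=
  mul_nonneg (pow_nonneg hq₀ _) (pow_nonneg (sub_nonneg.mpr hq₁) _)

lemma sum_restrictionWeight (q : ℝ) : ∑ I : Finset (Fin n), restrictionWeight q I = 1 := by
  simp [restrictionWeight, Fin.sum_pow_mul_eq_add_pow]

lemma sum_restrictionWeight_disjoint (q : ℝ) (S : Finset (Fin n)) :
    ∑ I with Disjoint S I, restrictionWeight q I = (1 - q) ^ #S := by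
  have hfilter : ({I | Disjoint S I} : Finset (Finset (Fin n))) = Sᶜ.powerset := by
    ext I
    simp [subset_compl_iff_disjoint_left]
  have hcard : #Sᶜ + #S = n := by simp [card_compl_add_card]
  calc ∑ I with Disjoint S I, restrictionWeight q I
      = ∑ I ∈ Sᶜ.powerset, q ^ #I * (1 - q) ^ (#Sᶜ - #I) * (1 - q) ^ #S := by
        rw [hfilter]
        refine sum_congr rfl fun I hI => ?_
        have : #I ≤ #Sᶜ := card_le_card (mem_powerset.mp hI)
        rw [restrictionWeight, mul_assoc, ← pow_add]
        congr 2
        omega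
    _ = (1 - q) ^ #S := by rw [← sum_mul, sum_pow_mul_eq_add_pow]; simp

/-- Each `S` misses a random alive set with probability `(1 - q)^{|S|}`, and when it does,
`‖P_I g‖² ≥ ‖g^{=S}‖²`. -/
lemma sum_one_sub_pow_mul_norm2sq_le {Ω : Type*} [Fintype Ω] {μ : Ω → ℝ}
    (hμ : ∀ a, 0 < μ a) (hsum : ∑ a, μ a = 1)
    {F : Finset (Fin n) → (Fin n → Ω) → ℂ} (hF : ∀ S, InVeq μ (F S) S)
    {q : ℝ} (hq₀ : 0 ≤ q) (hq₁ : q ≤ 1) (A : Finset (Finset (Fin n))) :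
    ∑ S ∈ A, (1 - q) ^ #S * norm2sq μ (F S) ≤
      ∑ I, restrictionWeight q I * norm2sq μ (avgOn μ I (∑ S, F S)) := calc
  ∑ S ∈ A, (1 - q) ^ #S * norm2sq μ (F S)
      = ∑ I, restrictionWeight q I * ∑ S ∈ A with Disjoint S I, norm2sq μ (F S) := by
        simp only [← sum_restrictionWeight_disjoint q, sum_mul, mul_sum, sum_filter]
        rw [sum_comm]
        simp only [mul_ite, mul_zero, ite_mul, zero_mul]
    _ ≤ _ := sum_le_sum fun I _ => mul_le_mul_of_nonneg_left
        (sum_norm2sq_disjoint_le hμ hsum hF A I) (restrictionWeight_nonneg hq₀ hq₁ I)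

end RandomRestriction

section Markov

variable {Ω : Type*} [Fintype Ω] {μ : Ω → ℝ} {n : ℕ}

lemma normSq_le_add_indicator {z : ℂ} (hz : ‖z‖ ≤ 1) {θ : ℝ} (hθ : 0 ≤ θ) :
    Complex.normSq z ≤ θ + if √θ ≤ ‖z‖ then 1 else 0 := by
  rw [← Complex.sq_norm]
  split_ifs with h
  · nlinarith [norm_nonneg z]
  · have := pow_lt_pow_left₀ (not_le.mp h) (norm_nonneg z) two_ne_zero
    rw [Real.sq_sqrt hθ] at this
    linarith

lemma sum_mul_norm2sq_le_add_prob {α : Type*} [Fintype α] {p : α → ℝ} (hp : ∀ a, 0 ≤ p a)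
    (hp₁ : ∑ a, p a = 1) (hμ : ∀ a, 0 < μ a) (hsum : ∑ a, μ a = 1)
    {f : α → (Fin n → Ω) → ℂ} (hf : ∀ a x, ‖f a x‖ ≤ 1) {θ : ℝ} (hθ : 0 ≤ θ) :
    ∑ a, p a * norm2sq μ (f a) ≤
      θ + ∑ a, ∑ x, p a * wtp μ x * if √θ ≤ ‖f a x‖ then 1 else 0 := by
  have hpoint : ∀ a x, p a * wtp μ x * Complex.normSq (f a x) ≤
      p a * wtp μ x * θ + p a * wtp μ x * if √θ ≤ ‖f a x‖ then 1 else 0 := fun a x => by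
    rw [← mul_add]
    exact mul_le_mul_of_nonneg_left (normSq_le_add_indicator (hf a x) hθ)
      (mul_nonneg (hp a) (wtp_pos hμ x).le)
  calc ∑ a, p a * norm2sq μ (f a)
      = ∑ a, ∑ x, p a * wtp μ x * Complex.normSq (f a x) := by
        simp only [norm2sq, mul_sum, mul_assoc]
    _ ≤ ∑ a, ∑ x, (p a * wtp μ x * θ + p a * wtp μ x * if √θ ≤ ‖f a x‖ then 1 else 0) :=
        sum_le_sum fun a _ => sum_le_sum fun x _ => hpoint a x
    _ = θ + ∑ a, ∑ x, p a * wtp μ x * if √θ ≤ ‖f a x‖ then 1 else 0 := by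
        simp only [sum_add_distrib, ← sum_mul, ← mul_sum, sum_wtp hsum, hp₁, mul_one, one_mul]

end Markov

lemma half_le_one_sub_pow {d k : ℕ} (hd : 1 ≤ d) (hk : k ≤ d) :
    1 / 2 ≤ (1 - 1 / (2 * (d : ℝ))) ^ k := by
  have hd' : (1 : ℝ) ≤ d := by exact_mod_cast hd
  have hq₀ : 0 ≤ 1 / (2 * (d : ℝ)) := by positivity
  have hq₁ : 1 / (2 * (d : ℝ)) ≤ 1 / 2 := by gcongr; linarith
  calc (1 : ℝ) / 2 = 1 + d * -(1 / (2 * (d : ℝ))) := by field_simp; ring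
    _ ≤ (1 - 1 / (2 * (d : ℝ))) ^ d := by
        simpa [sub_eq_add_neg] using one_add_mul_le_pow (a := -(1 / (2 * (d : ℝ)))) (by linarith) d
    _ ≤ (1 - 1 / (2 * (d : ℝ))) ^ k := pow_le_pow_of_le_one (by linarith) (by linarith) hk

theorem restriction_to_correlation_general (Ω : Type) [Fintype Ω] (μ : Ω → ℝ)
    (hμ : ∀ a, 0 < μ a) (hsum : ∑ a, μ a = 1)
    (n d : ℕ) (hd : 1 ≤ d) (ξ : ℝ) (hξ : 0 < ξ)
    (g : (Fin n → Ω) → ℂ) (hg : ∀ x, ‖g x‖ ≤ 1)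
    (F : Finset (Fin n) → ((Fin n → Ω) → ℂ))
    (hF : ∀ S, InVeq μ (F S) S) (hdec : g = ∑ S, F S)
    (hW : ξ ≤ ∑ S ∈ Finset.univ.filter (fun S : Finset (Fin n) => S.card ≤ d),
      norm2sq μ (F S)) :
    ξ / (2 * Real.exp 1) ≤
      ∑ I : Finset (Fin n), ∑ y : Fin n → Ω,
        (1 / (2 * (d : ℝ))) ^ I.card * (1 - 1 / (2 * (d : ℝ))) ^ (n - I.card) * wtp μ y *
          (if Real.sqrt (ξ / (2 * Real.exp 1)) ≤
              ‖(∑ w : {i // i ∈ I} → Ω,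
                ((∏ i, μ (w i) : ℝ) : ℂ) * g (mergeF I w y))‖
           then 1 else 0) := by
  set q : ℝ := 1 / (2 * d)
  set θ : ℝ := ξ / (2 * Real.exp 1)
  have hq₀ : 0 ≤ q := by positivity
  have hq₁ : q ≤ 1 := by
    have : (1 : ℝ) ≤ d := by exact_mod_cast hd
    exact div_le_one_of_le₀ (by linarith) (by positivity)
  have hθξ : 2 * θ ≤ ξ / 2 := by
    have : 2 * θ = ξ / Real.exp 1 := by ring
    rw [this]
    exact div_le_div_of_nonneg_left hξ.le two_pos (by linarith [Real.exp_one_gt_d9])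
  change θ ≤ ∑ I, ∑ y, restrictionWeight q I * wtp μ y * if √θ ≤ ‖avgOn μ I g y‖ then 1 else 0
  subst hdec
  have hlow : ξ / 2 ≤ ∑ I, restrictionWeight q I * norm2sq μ (avgOn μ I (∑ S, F S)) := calc
    ξ / 2 ≤ ∑ S with #S ≤ d, 1 / 2 * norm2sq μ (F S) := by rw [← mul_sum]; linarith
    _ ≤ ∑ S with #S ≤ d, (1 - q) ^ #S * norm2sq μ (F S) := sum_le_sum fun S hS =>
        mul_le_mul_of_nonneg_right (half_le_one_sub_pow hd (mem_filter.mp hS).2)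
          (norm2sq_nonneg hμ _)
    _ ≤ _ := sum_one_sub_pow_mul_norm2sq_le hμ hsum hF hq₀ hq₁ _
  have hmarkov := sum_mul_norm2sq_le_add_prob (restrictionWeight_nonneg hq₀ hq₁)
    (sum_restrictionWeight q) hμ hsum (fun I => norm_avgOn_le_one (I := I) hμ hsum hg)
    (by positivity : 0 ≤ θ)
  linarith

/-- **Significant low-level weight gives bias after a random restriction.** If `g : Ω^n → ℂ` is
1-bounded with `W_{≤d}[g] ≥ ξ`, then a random restriction `(I,y)` with alive-probability
`1/(2d)` satisfies `|E[g_{Ī→y}]| ≥ √(ξ/(2e))` with probability at least `ξ/(2e)`. The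
probability is written out as a sum over `I` and `y` of the corresponding weights. -/
theorem restriction_to_correlation (Ω : Type) [Fintype Ω] [Nonempty Ω] (μ : Ω → ℝ)
    (hμ : ∀ a, 0 < μ a) (hsum : ∑ a, μ a = 1)
    (n d : ℕ) (hd : 1 ≤ d) (ξ : ℝ) (hξ : 0 < ξ)
    (g : (Fin n → Ω) → ℂ) (hg : ∀ x, ‖g x‖ ≤ 1)
    (F : Finset (Fin n) → ((Fin n → Ω) → ℂ))
    (hF : ∀ S, InVeq μ (F S) S) (hdec : g = ∑ S, F S)
    (hW : ξ ≤ ∑ S ∈ Finset.univ.filter (fun S : Finset (Fin n) => S.card ≤ d),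
      norm2sq μ (F S)) :
    ξ / (2 * Real.exp 1) ≤
      ∑ I : Finset (Fin n), ∑ y : Fin n → Ω,
        (1 / (2 * (d : ℝ))) ^ I.card * (1 - 1 / (2 * (d : ℝ))) ^ (n - I.card) * wtp μ y *
          (if Real.sqrt (ξ / (2 * Real.exp 1)) ≤
              ‖(∑ w : {i // i ∈ I} → Ω,
                ((∏ i, μ (w i) : ℝ) : ℂ) * g (mergeF I w y))‖
           then 1 else 0) :=
  restriction_to_correlation_general Ω μ hμ hsum n d hd ξ hξ g hg F hF hdec hW
end
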